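/- arXiv:2206.01779 — 4 statements merged into one kernel-verified Lean document; each statement's English description precedes it below -/
import Mathlib

section
/- Let w_j = σ² λ₁ λ_j / (1 + σ² ‖λ‖₂²) with λ₁ ≠ 0 and σ > 0. Then w lies in the simplex Δ^J (that is, w_j ≥ 0 for all j and Σ_j w_j = 1) if and only if (1) sign(λ_j) = sign(λ₁) for all j with λ_j ≠ 0, and (2) Σ_j λ_j² − λ₁ Σ_j λ_j + 1/σ² = 0. -/
/-!
Since `1 + σ² ‖λ‖²` and `σ²` are positive, `w_j ≥ 0` says exactly `λ₁ λ_j ≥ 0`, and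
`Σ_j w_j = 1` says `σ² λ₁ Σ_j λ_j = 1 + σ² ‖λ‖²`, which is condition (2) multiplied by `σ²`.
Condition (2) forces `λ₁ Σ_j λ_j = ‖λ‖² + 1/σ² > 0`, so `λ₁ ≠ 0`, and then `λ₁ λ_j ≥ 0` is
the sign condition (1).
-/

open Finset

theorem Real.mul_nonneg_iff_sign_eq {a : ℝ} (ha : a ≠ 0) (b : ℝ) :
    0 ≤ a * b ↔ (b ≠ 0 → Real.sign b = Real.sign a) := by
  rcases eq_or_ne b 0 with rfl | hb
  · simp
  rw [(mul_ne_zero ha hb).symm.le_iff_lt, imp_iff_right hb]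
  rcases ha.lt_or_gt with ha | ha <;> rcases hb.lt_or_gt with hb | hb <;>
    simp only [Real.sign_of_neg, Real.sign_of_pos, ha, hb] <;> norm_num <;> nlinarith

section SyntheticWeight

variable {ι : Type*} [Fintype ι] (σ lam1 : ℝ) (lam : ι → ℝ)

noncomputable def syntheticWeight (j : ι) : ℝ :=
  σ ^ 2 * lam1 * lam j / (1 + σ ^ 2 * ∑ i, lam i ^ 2)

variable {σ}

lemma one_add_mul_sum_sq_pos : 0 < 1 + σ ^ 2 * ∑ i, lam i ^ 2 := by
  have : 0 ≤ ∑ i, lam i ^ 2 := sum_nonneg fun i _ => sq_nonneg (lam i)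
  positivity

lemma syntheticWeight_nonneg_iff (hσ : σ ≠ 0) (j : ι) :
    0 ≤ syntheticWeight σ lam1 lam j ↔ 0 ≤ lam1 * lam j := by
  rw [syntheticWeight, le_div_iff₀ (one_add_mul_sum_sq_pos lam), zero_mul, mul_assoc,
    mul_nonneg_iff_of_pos_left (by positivity)]

lemma sum_syntheticWeight_eq_one_iff (hσ : σ ≠ 0) :
    ∑ j, syntheticWeight σ lam1 lam j = 1 ↔
      (∑ j, lam j ^ 2) - lam1 * ∑ j, lam j + 1 / σ ^ 2 = 0 := by
  have hD := (one_add_mul_sum_sq_pos (σ := σ) lam).ne'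
  simp only [syntheticWeight, ← sum_div, ← mul_sum, div_eq_one_iff_eq hD]
  field_simp
  constructor <;> intro h <;> linarith

end SyntheticWeight

theorem simplex_characterization_general (J : ℕ) (lam1 : ℝ)
    (lam : Fin J → ℝ) (σ : ℝ) (hσ : 0 < σ) (w : Fin J → ℝ)
    (hw : ∀ j, w j = σ ^ 2 * lam1 * lam j / (1 + σ ^ 2 * ∑ i, (lam i) ^ 2)) :
    ((∀ j, 0 ≤ w j) ∧ ∑ j, w j = 1) ↔
      ((∀ j, lam j ≠ 0 → Real.sign (lam j) = Real.sign lam1) ∧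
        (∑ j, (lam j) ^ 2) - lam1 * (∑ j, lam j) + 1 / σ ^ 2 = 0) := by
  obtain rfl : w = syntheticWeight σ lam1 lam := funext hw
  rw [sum_syntheticWeight_eq_one_iff lam1 lam hσ.ne']
  refine and_congr_left fun hbalance => ?_
  have hlam1 : lam1 ≠ 0 := by
    rintro rfl
    have : 0 ≤ ∑ j, lam j ^ 2 := sum_nonneg fun j _ => sq_nonneg (lam j)
    have : 0 < 1 / σ ^ 2 := by positivity
    linarith
  simp only [syntheticWeight_nonneg_iff lam1 lam hσ.ne', Real.mul_nonneg_iff_sign_eq hlam1]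

/-- Simplex characterization: `w ∈ Δ^J` iff (1) every nonzero `λ_j` has the sign
of `λ₁` and (2) `Σ_j λ_j² − λ₁ Σ_j λ_j + 1/σ² = 0`. -/
theorem simplex_characterization (J : ℕ) (hJ : 1 ≤ J) (lam1 : ℝ) (h1 : lam1 ≠ 0)
    (lam : Fin J → ℝ) (σ : ℝ) (hσ : 0 < σ) (w : Fin J → ℝ)
    (hw : ∀ j, w j = σ ^ 2 * lam1 * lam j / (1 + σ ^ 2 * ∑ i, (lam i) ^ 2)) :
    ((∀ j, 0 ≤ w j) ∧ ∑ j, w j = 1) ↔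
      ((∀ j, lam j ≠ 0 → Real.sign (lam j) = Real.sign lam1) ∧
        (∑ j, (lam j) ^ 2) - lam1 * (∑ j, lam j) + 1 / σ ^ 2 = 0) :=
  simplex_characterization_general J lam1 lam σ hσ w hw
end

section
/- Let λ₁ ∈ ℝ be fixed and (λ^{(J)})_{J} a family of vectors λ^{(J)} ∈ ℝ^J such that (Σ_j |λ^{(J)}_j|)/‖λ^{(J)}‖₂² → 0 as J → ∞. Then for all sufficiently large J, the equation Σ_j (λ^{(J)}_j)² − λ₁ Σ_j λ^{(J)}_j + 1/σ² = 0 fails; i.e., eventually ‖λ^{(J)}‖₂² − λ₁ Σ_j λ^{(J)}_j + 1/σ² > 0. -/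
/-!
Since `|λ₁ Σ_j λ_j| ≤ |λ₁| Σ_j |λ_j|` and the ratio `Σ_j |λ_j| / ‖λ‖₂²` tends to `0`, eventually
`λ₁ Σ_j λ_j ≤ ‖λ‖₂²`, so the left-hand side of the equation is at least `1/σ² > 0`.
-/

open Filter

lemma Finset.sum_abs_eq_zero_of_sum_sq_eq_zero {ι : Type*} {s : Finset ι} {x : ι → ℝ}
    (h : ∑ i ∈ s, x i ^ 2 = 0) : ∑ i ∈ s, |x i| = 0 := by
  rw [Finset.sum_eq_zero_iff_of_nonneg fun i _ => sq_nonneg (x i)] at h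
  exact Finset.sum_eq_zero fun i hi => by simpa using h i hi

lemma Finset.mul_sum_le_sum_sq_of_mul_ratio_le_one {ι : Type*} (s : Finset ι) (x : ι → ℝ)
    (c : ℝ) (h : |c| * ((∑ i ∈ s, |x i|) / ∑ i ∈ s, x i ^ 2) ≤ 1) :
    c * ∑ i ∈ s, x i ≤ ∑ i ∈ s, x i ^ 2 := by
  set A := ∑ i ∈ s, |x i|
  set S := ∑ i ∈ s, x i ^ 2
  have hcA : c * ∑ i ∈ s, x i ≤ |c| * A := by
    calc c * ∑ i ∈ s, x i ≤ |c * ∑ i ∈ s, x i| := le_abs_self _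
      _ = |c| * |∑ i ∈ s, x i| := abs_mul _ _
      _ ≤ |c| * A := by gcongr; exact Finset.abs_sum_le_sum_abs _ _
  have hS0 : 0 ≤ S := Finset.sum_nonneg fun i _ => sq_nonneg (x i)
  rcases hS0.eq_or_lt with hS | hS
  -- here the ratio is the junk value `A / 0 = 0`, but `S = 0` forces `x = 0` on `s`
  · have hA : A = 0 := Finset.sum_abs_eq_zero_of_sum_sq_eq_zero hS.symm
    rw [hA, mul_zero] at hcA
    rwa [← hS]
  · calc c * ∑ i ∈ s, x i ≤ |c| * A := hcA
      _ = |c| * (A / S) * S := by rw [mul_assoc, div_mul_cancel₀ A hS.ne']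
      _ ≤ 1 * S := by gcongr
      _ = S := one_mul S

/-- If `(Σ_j |λ_j|)/‖λ‖₂² → 0` as `J → ∞`, then for all sufficiently large `J`
the characterization equation fails: `‖λ‖₂² − λ₁ Σ_j λ_j + 1/σ² > 0`. -/
theorem no_fixed_lambda1_characterization (σ : ℝ) (hσ : 0 < σ) (lam1 : ℝ)
    (lam : (J : ℕ) → Fin J → ℝ)
    (h : Tendsto (fun J => (∑ j, |lam J j|) / (∑ j, (lam J j) ^ 2)) atTop (nhds 0)) :
    ∀ᶠ J in atTop,
      (∑ j, (lam J j) ^ 2) - lam1 * (∑ j, lam J j) + 1 / σ ^ 2 > 0 := by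
  have hscaled : Tendsto (fun J => |lam1| * ((∑ j, |lam J j|) / ∑ j, (lam J j) ^ 2))
      atTop (nhds 0) := by
    simpa using h.const_mul |lam1|
  filter_upwards [hscaled.eventually (eventually_le_nhds one_pos)] with J hJ
  have hlin := Finset.mul_sum_le_sum_sq_of_mul_ratio_le_one Finset.univ (lam J) lam1 hJ
  have hσ2 : 0 < 1 / σ ^ 2 := by positivity
  linarith
end

section
/- Let λ₁ = λᵀ w* for some w* ∈ Δ^J (the simplex) and let σ > 0, with w_j = σ² λ₁ λ_j / (1 + σ² ‖λ‖₂²). Suppose all λ_j have the same sign as λ₁, ‖λ‖₂² → ∞ as J → ∞, and |λ₁| · ‖λ‖₁ / ‖λ‖₂² → 1. Then Σ_j w_j → 1 and each w_j ≥ 0, i.e. the weights are asymptotically in the simplex: dist(w, Δ^J) → 0. -/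
open Filter Topology

/-! The sign condition makes every `λ₁ λ_j` nonnegative, so each weight is nonnegative and
`λ₁ Σ_j λ_j = |λ₁| ‖λ‖₁`. Hence `Σ_j w_j` factors as
`(|λ₁| ‖λ‖₁ / ‖λ‖₂²) · (σ² ‖λ‖₂² / (1 + σ² ‖λ‖₂²))`, a product of two factors tending to `1`. -/

lemma Real.mul_nonneg_of_sign_eq {a b : ℝ} (h : Real.sign a = Real.sign b) : 0 ≤ a * b := by
  rcases lt_trichotomy a 0 with ha | rfl | ha <;> rcases lt_trichotomy b 0 with hb | rfl | hb <;>
    simp_all [Real.sign_of_neg, Real.sign_of_pos] <;> nlinarith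

lemma Finset.mul_sum_eq_abs_mul_sum_abs {ι R : Type*} [CommRing R] [LinearOrder R]
    [IsStrictOrderedRing R] (s : Finset ι) (c : R) (x : ι → R) (h : ∀ i ∈ s, 0 ≤ c * x i) :
    c * ∑ i ∈ s, x i = |c| * ∑ i ∈ s, |x i| := by
  rw [Finset.mul_sum, Finset.mul_sum]
  exact Finset.sum_congr rfl fun i hi => by rw [← abs_mul, abs_of_nonneg (h i hi)]

lemma Filter.Tendsto.div_one_add_atTop {α : Type*} {l : Filter α} {f : α → ℝ}
    (hf : Tendsto f l atTop) : Tendsto (fun x => f x / (1 + f x)) l (𝓝 1) := by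
  have hinv : Tendsto (fun x => 1 - (1 + f x)⁻¹) l (𝓝 (1 - 0)) :=
    (tendsto_inv_atTop_zero.comp (tendsto_atTop_add_const_left l 1 hf)).const_sub 1
  rw [sub_zero] at hinv
  refine hinv.congr' ?_
  filter_upwards [hf.eventually_gt_atTop 0] with x hx
  field_simp
  ring

theorem weights_asymptotically_in_simplex_general (σ : ℝ) (hσ : 0 < σ)
    (lam : (J : ℕ) → Fin J → ℝ)
    (lam1 : ℕ → ℝ)
    (hsign : ∀ J j, Real.sign (lam J j) = Real.sign (lam1 J))
    (hnorm : Tendsto (fun J => ∑ j, (lam J j) ^ 2) atTop atTop)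
    (hratio : Tendsto
      (fun J => |lam1 J| * (∑ j, |lam J j|) / (∑ j, (lam J j) ^ 2)) atTop (nhds 1))
    (w : (J : ℕ) → Fin J → ℝ)
    (hw : ∀ J j, w J j = σ ^ 2 * lam1 J * lam J j / (1 + σ ^ 2 * ∑ i, (lam J i) ^ 2)) :
    (∀ J j, 0 ≤ w J j) ∧
    Tendsto (fun J => ∑ j, w J j) atTop (nhds 1) := by
  have hprod : ∀ J j, 0 ≤ lam1 J * lam J j := fun J j =>
    mul_comm (lam J j) (lam1 J) ▸ Real.mul_nonneg_of_sign_eq (hsign J j)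
  have hden : ∀ J, 0 < 1 + σ ^ 2 * ∑ i, (lam J i) ^ 2 := fun J => by positivity
  refine ⟨fun J j => ?_, ?_⟩
  · rw [hw, mul_assoc]
    exact div_nonneg (mul_nonneg (sq_nonneg σ) (hprod J j)) (hden J).le
  have hfactor := (hnorm.const_mul_atTop (pow_pos hσ 2)).div_one_add_atTop
  refine (mul_one (1 : ℝ) ▸ hratio.mul hfactor).congr' ?_
  filter_upwards [hnorm.eventually_gt_atTop 0] with J hS
  have hsum : ∑ j, w J j
      = σ ^ 2 * (lam1 J * ∑ j, lam J j) / (1 + σ ^ 2 * ∑ i, (lam J i) ^ 2) := by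
    simp only [hw, ← Finset.sum_div, Finset.mul_sum, mul_assoc]
  rw [hsum, Finset.mul_sum_eq_abs_mul_sum_abs _ _ _ fun j _ => hprod J j]
  field_simp

/-- If `λ₁ = λᵀ w*` for simplex `w*`, all `λ_j` share the sign of `λ₁`,
`‖λ‖₂² → ∞` and `|λ₁|‖λ‖₁/‖λ‖₂² → 1`, then the population weights
`w_j = σ²λ₁λ_j/(1+σ²‖λ‖₂²)` are nonnegative and their sum tends to `1`:
asymptotically `w` lies in the simplex. -/
theorem weights_asymptotically_in_simplex (σ : ℝ) (hσ : 0 < σ)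
    (lam : (J : ℕ) → Fin J → ℝ) (wstar : (J : ℕ) → Fin J → ℝ)
    (hstar_nonneg : ∀ J j, 0 ≤ wstar J j) (hstar_sum : ∀ J, 0 < J → ∑ j, wstar J j = 1)
    (lam1 : ℕ → ℝ) (hlam1 : ∀ J, lam1 J = ∑ j, lam J j * wstar J j)
    (hsign : ∀ J j, Real.sign (lam J j) = Real.sign (lam1 J))
    (hnorm : Tendsto (fun J => ∑ j, (lam J j) ^ 2) atTop atTop)
    (hratio : Tendsto
      (fun J => |lam1 J| * (∑ j, |lam J j|) / (∑ j, (lam J j) ^ 2)) atTop (nhds 1))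
    (w : (J : ℕ) → Fin J → ℝ)
    (hw : ∀ J j, w J j = σ ^ 2 * lam1 J * lam J j / (1 + σ ^ 2 * ∑ i, (lam J i) ^ 2)) :
    (∀ J j, 0 ≤ w J j) ∧
    Tendsto (fun J => ∑ j, w J j) atTop (nhds 1) :=
  weights_asymptotically_in_simplex_general σ hσ lam lam1 hsign hnorm hratio w hw
end

section
/- Under the conditions sign(λ_j)=sign(λ₁) for all j and ‖λ‖₂² → ∞ with |λ₁|‖λ‖₁/‖λ‖₂² → 1 as J → ∞, the sum Σ_j w_j λ_j = σ² λ₁ ‖λ‖₂² / (1 + σ² ‖λ‖₂²) → λ₁, i.e. the weighted combination of donor loadings recovers the treated loading in the limit. -/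
open Filter Topology

/-! The weights are proportional to `λ`, so `Σ_j w_j λ_j = λ₁ · s/(1+s)` with
`s = σ²‖λ‖₂²`, and `s/(1+s) = 1 - 1/(1+s) → 1` as `s → ∞`. -/

theorem sum_mul_div_mul_self {ι : Type*} [Fintype ι] (a d : ℝ) (l : ι → ℝ) :
    ∑ j, a * l j / d * l j = a * (∑ j, l j ^ 2) / d := by
  rw [Finset.mul_sum, Finset.sum_div]
  exact Finset.sum_congr rfl fun j _ => by ring

theorem tendsto_div_one_add_atTop : Tendsto (fun s : ℝ => s / (1 + s)) atTop (𝓝 1) := by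
  have hinv : Tendsto (fun s : ℝ => (1 + s)⁻¹) atTop (𝓝 0) :=
    (tendsto_atTop_add_const_left _ 1 tendsto_id).inv_tendsto_atTop
  have hsub : Tendsto (fun s : ℝ => 1 - (1 + s)⁻¹) atTop (𝓝 (1 - 0)) :=
    tendsto_const_nhds.sub hinv
  rw [sub_zero] at hsub
  refine hsub.congr' ?_
  filter_upwards [eventually_gt_atTop 0] with s hs
  field_simp
  ring

theorem weighted_loadings_recover_treated_general (σ lam1 : ℝ) (hσ : 0 < σ)
    (lam : (J : ℕ) → Fin J → ℝ)
    (hnorm : Tendsto (fun J => ∑ j, (lam J j) ^ 2) atTop atTop)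
    (w : (J : ℕ) → Fin J → ℝ)
    (hw : ∀ J j, w J j = σ ^ 2 * lam1 * lam J j / (1 + σ ^ 2 * ∑ i, (lam J i) ^ 2)) :
    (∀ J, ∑ j, w J j * lam J j =
      σ ^ 2 * lam1 * (∑ j, (lam J j) ^ 2) / (1 + σ ^ 2 * ∑ j, (lam J j) ^ 2)) ∧
    Tendsto (fun J => ∑ j, w J j * lam J j) atTop (nhds lam1) := by
  have hsum : ∀ J, ∑ j, w J j * lam J j =
      σ ^ 2 * lam1 * (∑ j, (lam J j) ^ 2) / (1 + σ ^ 2 * ∑ j, (lam J j) ^ 2) := fun J => by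
    simp only [hw]
    exact sum_mul_div_mul_self _ _ _
  refine ⟨hsum, ?_⟩
  have hs : Tendsto (fun J => σ ^ 2 * ∑ j, (lam J j) ^ 2) atTop atTop :=
    hnorm.const_mul_atTop (by positivity)
  have hlim := (tendsto_div_one_add_atTop.comp hs).const_mul lam1
  rw [mul_one] at hlim
  refine hlim.congr fun J => ?_
  rw [hsum, Function.comp_apply]
  ring

/-- Under the sign condition and `‖λ‖₂² → ∞` with `|λ₁|‖λ‖₁/‖λ‖₂² → 1`, the sum
`Σ_j w_j λ_j = σ²λ₁‖λ‖₂²/(1+σ²‖λ‖₂²)` converges to `λ₁`: the weighted donor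
loadings recover the treated loading in the limit. -/
theorem weighted_loadings_recover_treated (σ lam1 : ℝ) (hσ : 0 < σ)
    (lam : (J : ℕ) → Fin J → ℝ)
    (hsign : ∀ J j, Real.sign (lam J j) = Real.sign lam1)
    (hnorm : Tendsto (fun J => ∑ j, (lam J j) ^ 2) atTop atTop)
    (hratio : Tendsto
      (fun J => |lam1| * (∑ j, |lam J j|) / (∑ j, (lam J j) ^ 2)) atTop (nhds 1))
    (w : (J : ℕ) → Fin J → ℝ)
    (hw : ∀ J j, w J j = σ ^ 2 * lam1 * lam J j / (1 + σ ^ 2 * ∑ i, (lam J i) ^ 2)) :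
    (∀ J, ∑ j, w J j * lam J j =
      σ ^ 2 * lam1 * (∑ j, (lam J j) ^ 2) / (1 + σ ^ 2 * ∑ j, (lam J j) ^ 2)) ∧
    Tendsto (fun J => ∑ j, w J j * lam J j) atTop (nhds lam1) :=
  weighted_loadings_recover_treated_general σ lam1 hσ lam hnorm w hw
end
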